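/- Let each feasible set Ξ_i ⊆ ℝ^n be nonempty, compact and convex, let the team cost C : (ℝ^n)^N → ℝ be convex and continuously differentiable, and let each individual cost C_i : (ℝ^n)^N → ℝ be continuously differentiable and convex in u_i. Let u◇ ∈ Ξ be a Nash equilibrium of the game with costs C_1, …, C_N. Then u◇ is a team-optimal solution if and only if for every i there exists an open neighborhood δ(u_i◇) of u_i◇ in ℝ^n such that for all u_i ∈ δ(u_i◇) ∩ Ξ_i, both (u_i − u_i◇)ᵀ ∇_{u_i} C_i(u◇) ≥ 0 and (u_i − u_i◇)ᵀ ∇_{u_i} C(u◇) ≥ 0. -/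

import Mathlib

open RealInnerProductSpace

/-!
Along each block the relevant cost is minimized at `u◇ i` over the convex set `Ξ i`, which gives
the variational inequalities everywhere on `Ξ i`. Conversely, a variational inequality near
`u◇ i` extends to all of `Ξ i` by rescaling along segments, the directional derivative of `C` at
`u◇` toward any feasible `u` is the sum of the blockwise ones and hence nonnegative, and the
first-order characterization of convexity turns this into `C u◇ ≤ C u`.
-/

open Set Function Filter Topology

theorem ConvexOn.add_fderiv_sub_le {E : Type*} [NormedAddCommGroup E] [NormedSpace ℝ E]
    {f : E → ℝ} {f' : E →L[ℝ] ℝ} {x : E}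
    (hf : ConvexOn ℝ univ f) (hd : HasFDerivAt f f' x) (y : E) :
    f x + f' (y - x) ≤ f y := by
  have hline : ConvexOn ℝ univ (f ∘ AffineMap.lineMap (k := ℝ) x y) := by
    simpa using hf.comp_affineMap (AffineMap.lineMap (k := ℝ) x y)
  have hd' : HasFDerivAt f f' (AffineMap.lineMap x y (0 : ℝ)) := by
    rwa [AffineMap.lineMap_apply_zero]
  have hslope := hline.le_slope_of_hasDerivAt (mem_univ 0) (mem_univ 1) one_pos
    (hd'.comp_hasDerivAt 0 AffineMap.hasDerivAt_lineMap)
  simp only [slope, comp_apply, AffineMap.lineMap_apply_zero, AffineMap.lineMap_apply_one,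
    sub_zero, inv_one, vsub_eq_sub, one_smul] at hslope
  linarith

section FirstOrder

variable {F : Type*} [NormedAddCommGroup F] [InnerProductSpace ℝ F]

theorem IsMinOn.inner_gradient_nonneg [CompleteSpace F] {g : F → ℝ} {s : Set F} {x v : F}
    (hmin : IsMinOn g s x) (hg : DifferentiableAt ℝ g x) (hs : Convex ℝ s) (hx : x ∈ s)
    (hv : v ∈ s) : 0 ≤ ⟪v - x, gradient g x⟫ := by
  rw [real_inner_comm, inner_gradient_left]
  exact hmin.localize.hasFDerivWithinAt_nonneg hg.hasFDerivAt.hasFDerivWithinAt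
    (sub_mem_posTangentConeAt_of_segment_subset (hs.segment_subset hx hv))

theorem Convex.inner_sub_nonneg_of_mem_nhds {s δ : Set F} {x g v : F} (hs : Convex ℝ s)
    (hx : x ∈ s) (hδ : δ ∈ 𝓝 x) (hloc : ∀ w ∈ δ ∩ s, 0 ≤ ⟪w - x, g⟫) (hv : v ∈ s) :
    0 ≤ ⟪v - x, g⟫ := by
  have hpath : Tendsto (AffineMap.lineMap x v : ℝ → F) (𝓝[>] 0) (𝓝 x) :=
    (AffineMap.lineMap_continuous.tendsto' 0 x (by simp)).mono_left nhdsWithin_le_nhds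
  obtain ⟨t, htδ, ht⟩ := ((hpath.eventually_mem hδ).and (Ioo_mem_nhdsGT one_pos)).exists
  have hnonneg := hloc _ ⟨htδ, hs.lineMap_mem hx hv (Ioo_subset_Icc_self ht)⟩
  rw [← vsub_eq_sub, AffineMap.lineMap_vsub_left, vsub_eq_sub, real_inner_smul_left] at hnonneg
  exact (mul_nonneg_iff_of_pos_left ht.1).mp hnonneg

end FirstOrder

section Blocks

variable {ι : Type*} [DecidableEq ι]

theorem IsMinOn.comp_update {α β : Type*} [Preorder β] {f : (ι → α) → β} {s : ι → Set α}
    {x : ι → α} (hmin : IsMinOn f (univ.pi s) x) (hx : x ∈ univ.pi s) (i : ι) :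
    IsMinOn (fun w => f (update x i w)) (s i) (x i) :=
  isMinOn_iff.2 fun w hw => by
    simpa using isMinOn_iff.1 hmin _ ((update_mem_pi_iff_of_mem hx).2 fun _ => hw)

variable [Fintype ι]

theorem HasFDerivAt.comp_update {E G : Type*} [NormedAddCommGroup E] [NormedSpace ℝ E]
    [NormedAddCommGroup G] [NormedSpace ℝ G] {f : (ι → E) → G} {f' : (ι → E) →L[ℝ] G}
    {x : ι → E} (hf : HasFDerivAt f f' x) (i : ι) :
    HasFDerivAt (fun w => f (update x i w)) (f'.comp (.single ℝ (fun _ => E) i)) (x i) := by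
  have hsingle : ContinuousLinearMap.pi (Pi.single i (.id ℝ E)) = .single ℝ (fun _ => E) i := by
    ext v j
    rcases eq_or_ne j i with rfl | hji <;> simp [*]
  rw [← update_eq_self i x] at hf
  exact hsingle ▸ hf.comp (x i) (hasFDerivAt_update x (x i))

variable {F : Type*} [NormedAddCommGroup F] [InnerProductSpace ℝ F] [CompleteSpace F]

theorem DifferentiableAt.inner_gradient_update {f : (ι → F) → ℝ} {x : ι → F}
    (hf : DifferentiableAt ℝ f x) (i : ι) (v : F) :
    ⟪v, gradient (fun w => f (update x i w)) (x i)⟫ = fderiv ℝ f x (Pi.single i v) := by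
  rw [real_inner_comm, inner_gradient_left, (hf.hasFDerivAt.comp_update i).fderiv]
  rfl

theorem ConvexOn.isMinOn_pi_of_inner_gradient_update_nonneg {f : (ι → F) → ℝ}
    {s : ι → Set F} {x : ι → F} (hf : ConvexOn ℝ univ f) (hd : DifferentiableAt ℝ f x)
    (hvi : ∀ i, ∀ v ∈ s i, 0 ≤ ⟪v - x i, gradient (fun w => f (update x i w)) (x i)⟫) :
    IsMinOn f (univ.pi s) x := by
  refine isMinOn_iff.2 fun u hu => ?_
  have hdir : 0 ≤ fderiv ℝ f x (u - x) := by
    rw [← ContinuousLinearMap.sum_comp_single (L := fderiv ℝ f x) (v := u - x)]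
    refine Finset.sum_nonneg fun i _ => ?_
    simpa [hd.inner_gradient_update] using hvi i (u i) (hu i (mem_univ i))
  linarith [hf.add_fderiv_sub_le hd.hasFDerivAt u]

end Blocks

theorem NE_team_optimal_iff_multidim_general
    (n N : ℕ)
    (Ξ : Fin N → Set (EuclideanSpace ℝ (Fin n)))
    (hcvx : ∀ i, Convex ℝ (Ξ i))
    (C : (Fin N → EuclideanSpace ℝ (Fin n)) → ℝ)
    (Ci : Fin N → (Fin N → EuclideanSpace ℝ (Fin n)) → ℝ)
    (hC_convex : ConvexOn ℝ Set.univ C)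
    (hC_smooth : ContDiff ℝ 1 C)
    (hCi_smooth : ∀ i, ContDiff ℝ 1 (Ci i))
    (ud : Fin N → EuclideanSpace ℝ (Fin n))
    (hud_mem : ∀ i, ud i ∈ Ξ i)
    (hud_NE : ∀ i, ∀ v ∈ Ξ i, Ci i ud ≤ Ci i (Function.update ud i v)) :
    (∀ u : Fin N → EuclideanSpace ℝ (Fin n), (∀ i, u i ∈ Ξ i) → C ud ≤ C u)
      ↔
    (∀ i, ∃ δ : Set (EuclideanSpace ℝ (Fin n)), IsOpen δ ∧ ud i ∈ δ ∧
      ∀ v ∈ δ ∩ Ξ i,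
        (0 : ℝ) ≤ ⟪v - ud i, gradient (fun w => Ci i (Function.update ud i w)) (ud i)⟫ ∧
        (0 : ℝ) ≤ ⟪v - ud i, gradient (fun w => C (Function.update ud i w)) (ud i)⟫) := by
  have hCd : Differentiable ℝ C := hC_smooth.differentiable one_ne_zero
  have hud_pi : ud ∈ univ.pi Ξ := fun i _ => hud_mem i
  constructor
  · intro hopt i
    have hteam : IsMinOn C (univ.pi Ξ) ud :=
      isMinOn_iff.2 fun u hu => hopt u fun j => hu j (mem_univ j)
    have hnash : IsMinOn (fun w => Ci i (update ud i w)) (Ξ i) (ud i) :=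
      isMinOn_iff.2 fun v hv => by simpa using hud_NE i v hv
    have hCid : DifferentiableAt ℝ (Ci i) ud := (hCi_smooth i).differentiable one_ne_zero ud
    refine ⟨univ, isOpen_univ, mem_univ _, fun v ⟨_, hv⟩ => ⟨?_, ?_⟩⟩
    · exact hnash.inner_gradient_nonneg (hCid.hasFDerivAt.comp_update i).differentiableAt
        (hcvx i) (hud_mem i) hv
    · exact (hteam.comp_update hud_pi i).inner_gradient_nonneg
        ((hCd ud).hasFDerivAt.comp_update i).differentiableAt (hcvx i) (hud_mem i) hv
  · intro hloc u hu
    refine isMinOn_iff.1 (hC_convex.isMinOn_pi_of_inner_gradient_update_nonneg (hCd ud)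
      fun i v hv => ?_) u fun j _ => hu j
    obtain ⟨δ, hδ, hudδ, hδΞ⟩ := hloc i
    exact (hcvx i).inner_sub_nonneg_of_mem_nhds (hud_mem i) (hδ.mem_nhds hudδ)
      (fun w hw => (hδΞ w hw).2) hv

/-- With each `Ξ i ⊆ ℝ^n` nonempty, compact and convex, team cost `C` convex
and continuously differentiable, and individual costs `C_i` continuously differentiable
and convex in `u_i`, a Nash equilibrium `u◇` is a team-optimal solution if and only if
for every `i` there is an open neighborhood `δ(u_i◇)` of `u_i◇` in `ℝ^n` such that for all
`u_i ∈ δ(u_i◇) ∩ Ξ i`, both `(u_i − u_i◇)ᵀ ∇_{u_i} C_i(u◇) ≥ 0` and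
`(u_i − u_i◇)ᵀ ∇_{u_i} C(u◇) ≥ 0`. -/
theorem NE_team_optimal_iff_multidim
    (n N : ℕ)
    (Ξ : Fin N → Set (EuclideanSpace ℝ (Fin n)))
    (hne : ∀ i, (Ξ i).Nonempty)
    (hcpt : ∀ i, IsCompact (Ξ i))
    (hcvx : ∀ i, Convex ℝ (Ξ i))
    (C : (Fin N → EuclideanSpace ℝ (Fin n)) → ℝ)
    (Ci : Fin N → (Fin N → EuclideanSpace ℝ (Fin n)) → ℝ)
    (hC_convex : ConvexOn ℝ Set.univ C)
    (hC_smooth : ContDiff ℝ 1 C)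
    (hCi_smooth : ∀ i, ContDiff ℝ 1 (Ci i))
    (hCi_convex : ∀ i (u : Fin N → EuclideanSpace ℝ (Fin n)),
      ConvexOn ℝ Set.univ (fun v => Ci i (Function.update u i v)))
    (ud : Fin N → EuclideanSpace ℝ (Fin n))
    (hud_mem : ∀ i, ud i ∈ Ξ i)
    (hud_NE : ∀ i, ∀ v ∈ Ξ i, Ci i ud ≤ Ci i (Function.update ud i v)) :
    (∀ u : Fin N → EuclideanSpace ℝ (Fin n), (∀ i, u i ∈ Ξ i) → C ud ≤ C u)
      ↔
    (∀ i, ∃ δ : Set (EuclideanSpace ℝ (Fin n)), IsOpen δ ∧ ud i ∈ δ ∧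
      ∀ v ∈ δ ∩ Ξ i,
        (0 : ℝ) ≤ ⟪v - ud i, gradient (fun w => Ci i (Function.update ud i w)) (ud i)⟫ ∧
        (0 : ℝ) ≤ ⟪v - ud i, gradient (fun w => C (Function.update ud i w)) (ud i)⟫) :=
  NE_team_optimal_iff_multidim_general n N Ξ hcvx C Ci hC_convex hC_smooth hCi_smooth ud hud_mem
    hud_NE
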